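/- For λ > 0, ν ∈ (0,1], δ > 0 and s > 0 with s^ν > λ: 1/s · (λ^{δk}/(s^ν+λ)^{δk} − λ^{δ(k+1)}/(s^ν+λ)^{δ(k+1)}) is the Laplace transform of the function p_k(t) = λ^{δk} t^{νδk} E_{ν,νδk+1}^{δk}(−λ t^ν) − λ^{δ(k+1)} t^{νδ(k+1)} E_{ν,νδ(k+1)+1}^{δ(k+1)}(−λ t^ν), for every integer k ≥ 0. -/

import Mathlib

open Real MeasureTheory intervalIntegral

noncomputable def ML1 (ν z : ℝ) : ℝ := ∑' n : ℕ, z ^ n / Real.Gamma (ν * n + 1)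

noncomputable def ML2 (β γ z : ℝ) : ℝ := ∑' r : ℕ, z ^ r / Real.Gamma (β * r + γ)

noncomputable def poch (ξ : ℝ) (r : ℕ) : ℝ := ∏ i ∈ Finset.range r, (ξ + i)

noncomputable def ML3 (β γ ξ z : ℝ) : ℝ :=
  ∑' r : ℕ, poch ξ r * z ^ r / (r.factorial * Real.Gamma (β * r + γ))

/-!
Expanding the Mittag-Leffler function as a power series, the Laplace transform of
`t ^ (ν ξ) * E_{ν, νξ+1}^ξ (-c t ^ ν)` can be taken term by term: the `r`-th term transforms to
`s ^ (-νξ-1) * (ξ)_r / r! * (-c / s ^ ν) ^ r`, and for `|c| < s ^ ν` the transforms of the absolute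
values are summable, which justifies the interchange. The binomial series
`∑ (ξ)_r / r! x ^ r = (1 - x) ^ (-ξ)` then sums the transforms to `s⁻¹ (s ^ ν + c) ^ (-ξ)`.
The theorem is the difference of the cases `ξ = δ k` and `ξ = δ (k + 1)`, with `c = λ`.
-/

open Set

lemma poch_eq_ascPochhammer_eval (a : ℝ) (n : ℕ) : poch a n = (ascPochhammer ℝ n).eval a := by
  induction n with
  | zero => simp [poch]
  | succ n ih => rw [poch, Finset.prod_range_succ, ← poch, ih, ascPochhammer_succ_eval]

lemma choose_add_sub_one_eq_poch_div_factorial (a : ℝ) (n : ℕ) :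
    Ring.choose (a + n - 1) n = poch a n / n.factorial := by
  rw [← Ring.multichoose_eq, eq_div_iff (by positivity), mul_comm, ← nsmul_eq_mul,
    Ring.factorial_nsmul_multichoose_eq_ascPochhammer, Polynomial.ascPochhammer_smeval_eq_eval,
    poch_eq_ascPochhammer_eval]

theorem hasSum_poch_div_factorial_mul_pow (a : ℝ) {x : ℝ} (hx : |x| < 1) :
    HasSum (fun n ↦ poch a n / n.factorial * x ^ n) ((1 - x) ^ (-a)) := by
  have hx' : x ∈ Metric.eball (0 : ℝ) 1 := by
    simpa [Metric.mem_eball, edist_dist, Real.dist_eq] using hx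
  have := (Real.one_div_one_sub_rpow_hasFPowerSeriesOnBall_zero a).hasSum hx'
  simp only [FormalMultilinearSeries.ofScalars_apply_eq, choose_add_sub_one_eq_poch_div_factorial,
    smul_eq_mul, zero_add] at this
  rwa [rpow_neg (by linarith [(abs_lt.1 hx).2]), inv_eq_one_div]

theorem MeasureTheory.integrable_tsum_of_summable_integral_norm {α E ι : Type*} [MeasurableSpace α]
    {μ : Measure α} [NormedAddCommGroup E] [CompleteSpace E] [Countable ι] {F : ι → α → E}
    (hF_int : ∀ i, Integrable (F i) μ) (hF_sum : Summable fun i ↦ ∫ a, ‖F i a‖ ∂μ) :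
    Integrable (fun a ↦ ∑' i, F i a) μ := by
  refine ⟨.tsum fun i ↦ (hF_int i).1, ?_⟩
  calc ∫⁻ a, ‖∑' i, F i a‖ₑ ∂μ ≤ ∫⁻ a, ∑' i, ‖F i a‖ₑ ∂μ :=
        lintegral_mono fun a ↦ enorm_tsum_le_tsum_enorm
    _ = ∑' i, ENNReal.ofReal (∫ a, ‖F i a‖ ∂μ) := by
        rw [lintegral_tsum fun i ↦ (hF_int i).1.enorm]
        exact tsum_congr fun i ↦ (ofReal_integral_norm_eq_lintegral_enorm (hF_int i)).symm
    _ < ⊤ := by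
        rw [← ENNReal.ofReal_tsum_of_nonneg (fun i ↦ integral_nonneg fun a ↦ norm_nonneg _) hF_sum]
        exact ENNReal.ofReal_lt_top

lemma integrableOn_rpow_mul_exp_neg_mul {p s : ℝ} (hp : -1 < p) (hs : 0 < s) :
    IntegrableOn (fun t : ℝ ↦ t ^ p * exp (-(s * t))) (Ioi 0) := by
  simpa [Real.rpow_one] using integrableOn_rpow_mul_exp_neg_mul_rpow hp zero_lt_one hs

lemma integral_rpow_mul_exp_neg_mul {p s : ℝ} (hp : -1 < p) (hs : 0 < s) :
    ∫ t in Ioi 0, t ^ p * exp (-(s * t)) = (1 / s) ^ (p + 1) * Gamma (p + 1) := by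
  simpa using Real.integral_rpow_mul_exp_neg_mul_Ioi (a := p + 1) (by linarith) hs

theorem laplace_tsum_rpow_mul {a p : ℕ → ℝ} {s : ℝ} (hp : ∀ r, -1 < p r) (hs : 0 < s)
    (hsum : Summable fun r ↦ |a r| * ((1 / s) ^ (p r + 1) * Gamma (p r + 1))) :
    IntegrableOn (fun t ↦ ∑' r, a r * (t ^ p r * exp (-(s * t)))) (Ioi 0) ∧
      HasSum (fun r ↦ a r * ((1 / s) ^ (p r + 1) * Gamma (p r + 1)))
        (∫ t in Ioi 0, ∑' r, a r * (t ^ p r * exp (-(s * t)))) := by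
  have hint r : IntegrableOn (fun t ↦ a r * (t ^ p r * exp (-(s * t)))) (Ioi 0) :=
    (integrableOn_rpow_mul_exp_neg_mul (hp r) hs).const_mul (a r)
  have hnorm r : ∫ t in Ioi 0, ‖a r * (t ^ p r * exp (-(s * t)))‖ =
      |a r| * ((1 / s) ^ (p r + 1) * Gamma (p r + 1)) := by
    rw [← integral_rpow_mul_exp_neg_mul (hp r) hs, ← MeasureTheory.integral_const_mul]
    refine setIntegral_congr_fun measurableSet_Ioi fun t ht ↦ ?_
    rw [norm_mul, Real.norm_eq_abs,
      Real.norm_of_nonneg (mul_nonneg (rpow_nonneg ht.le _) (exp_pos _).le)]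
  have hsum' : Summable fun r ↦ ∫ t in Ioi 0, ‖a r * (t ^ p r * exp (-(s * t)))‖ := by
    simpa only [hnorm] using hsum
  have hintegral r : ∫ t in Ioi 0, a r * (t ^ p r * exp (-(s * t))) =
      a r * ((1 / s) ^ (p r + 1) * Gamma (p r + 1)) := by
    rw [MeasureTheory.integral_const_mul, integral_rpow_mul_exp_neg_mul (hp r) hs]
  exact ⟨integrable_tsum_of_summable_integral_norm hint hsum',
    by simpa only [hintegral] using hasSum_integral_of_summable_integral_norm hint hsum'⟩

section MittagLeffler

variable {ν ξ s : ℝ}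

lemma poch_nonneg (hξ : 0 ≤ ξ) (r : ℕ) : 0 ≤ poch ξ r :=
  Finset.prod_nonneg fun i _ ↦ by positivity

lemma ml3_coeff_mul_laplace_rpow (hν : 0 < ν) (hξ : 0 ≤ ξ) (hs : 0 < s) (x : ℝ) (r : ℕ) :
    poch ξ r * x ^ r / (r.factorial * Gamma (ν * r + (ν * ξ + 1))) *
        ((1 / s) ^ (ν * r + ν * ξ + 1) * Gamma (ν * r + ν * ξ + 1)) =
      (1 / s) ^ (ν * ξ + 1) * (poch ξ r / r.factorial * (x * (1 / s) ^ ν) ^ r) := by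
  have hΓ : Gamma (ν * r + ν * ξ + 1) ≠ 0 := (Gamma_pos_of_pos (by positivity)).ne'
  have hsplit : (1 / s) ^ (ν * r + ν * ξ + 1) = ((1 / s) ^ ν) ^ r * (1 / s) ^ (ν * ξ + 1) := by
    rw [add_assoc, rpow_add (by positivity), ← rpow_natCast, ← rpow_mul (by positivity),
      mul_comm ν]
  rw [← add_assoc, hsplit, mul_pow]
  field_simp

lemma exp_mul_rpow_mul_ML3_eq_tsum (c : ℝ) {t : ℝ} (ht : 0 < t) :
    exp (-(s * t)) * (t ^ (ν * ξ) * ML3 ν (ν * ξ + 1) ξ (-(c * t ^ ν))) =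
      ∑' r : ℕ, poch ξ r * (-c) ^ r / (r.factorial * Gamma (ν * r + (ν * ξ + 1))) *
        (t ^ (ν * r + ν * ξ) * exp (-(s * t))) := by
  rw [ML3, ← tsum_mul_left, ← tsum_mul_left]
  refine tsum_congr fun r ↦ ?_
  rw [← neg_mul c, mul_pow, ← rpow_natCast (t ^ ν), ← rpow_mul ht.le, rpow_add ht]
  ring

lemma one_div_rpow_mul_one_sub_rpow_neg_eq (hs : 0 < s) {c : ℝ} (hpos : 0 < s ^ ν + c) :
    (1 / s) ^ (ν * ξ + 1) * (1 - -c * (1 / s) ^ ν) ^ (-ξ) = 1 / s * ((s ^ ν + c) ^ ξ)⁻¹ := by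
  have hsν : 0 < s ^ ν := rpow_pos_of_pos hs ν
  have hinv : (1 / s) ^ ν = (s ^ ν)⁻¹ := by rw [one_div, inv_rpow hs.le]
  have h1 : (1 / s) ^ (ν * ξ + 1) = 1 / s * ((s ^ ν) ^ ξ)⁻¹ := by
    rw [rpow_add_one (by positivity), rpow_mul (by positivity), hinv, inv_rpow hsν.le, mul_comm]
  have h2 : 1 - -c * (1 / s) ^ ν = (s ^ ν + c) / s ^ ν := by
    rw [hinv]
    field_simp
    ring
  rw [h1, h2, rpow_neg (div_pos hpos hsν).le, div_rpow hpos.le hsν.le, inv_div]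
  field_simp

theorem laplace_rpow_mul_ML3 (hν : 0 < ν) (hξ : 0 ≤ ξ) (hs : 0 < s) {c : ℝ} (hc : |c| < s ^ ν) :
    IntegrableOn (fun t ↦ exp (-(s * t)) * (t ^ (ν * ξ) * ML3 ν (ν * ξ + 1) ξ (-(c * t ^ ν))))
        (Ioi 0) ∧
      ∫ t in Ioi 0, exp (-(s * t)) * (t ^ (ν * ξ) * ML3 ν (ν * ξ + 1) ξ (-(c * t ^ ν))) =
        1 / s * ((s ^ ν + c) ^ ξ)⁻¹ := by
  have hsν : 0 < s ^ ν := rpow_pos_of_pos hs ν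
  have hinv : (1 / s) ^ ν = (s ^ ν)⁻¹ := by rw [one_div, inv_rpow hs.le]
  have hq (x : ℝ) (hx : |x| = |c|) : |x * (1 / s) ^ ν| < 1 := by
    rw [abs_mul, hx, hinv, abs_inv, abs_of_pos hsν, mul_inv_lt_iff₀ hsν, one_mul]
    exact hc
  have habs r : |poch ξ r * (-c) ^ r / (r.factorial * Gamma (ν * r + (ν * ξ + 1)))| =
      poch ξ r * |c| ^ r / (r.factorial * Gamma (ν * r + (ν * ξ + 1))) := by
    have : 0 < Gamma (ν * r + (ν * ξ + 1)) := Gamma_pos_of_pos (by positivity)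
    rw [abs_div, abs_mul, abs_pow, abs_neg, abs_of_nonneg (poch_nonneg hξ r),
      abs_of_pos (by positivity : (0 : ℝ) < r.factorial * Gamma (ν * r + (ν * ξ + 1)))]
  obtain ⟨hint, hsum⟩ := laplace_tsum_rpow_mul (s := s)
    (a := fun r ↦ poch ξ r * (-c) ^ r / (r.factorial * Gamma (ν * r + (ν * ξ + 1))))
    (p := fun r ↦ ν * r + ν * ξ) (fun r ↦ neg_one_lt_zero.trans_le (by positivity)) hs (by
      simp only [habs, ml3_coeff_mul_laplace_rpow hν hξ hs]
      exact ((hasSum_poch_div_factorial_mul_pow ξ (hq _ (abs_abs c))).summable.mul_left _))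
  have hpt : EqOn (fun t ↦ exp (-(s * t)) * (t ^ (ν * ξ) * ML3 ν (ν * ξ + 1) ξ (-(c * t ^ ν))))
      (fun t ↦ ∑' r : ℕ, poch ξ r * (-c) ^ r / (r.factorial * Gamma (ν * r + (ν * ξ + 1))) *
        (t ^ (ν * r + ν * ξ) * exp (-(s * t)))) (Ioi 0) :=
    fun t ht ↦ exp_mul_rpow_mul_ML3_eq_tsum c ht
  refine ⟨hint.congr_fun hpt.symm measurableSet_Ioi, ?_⟩
  rw [setIntegral_congr_fun measurableSet_Ioi hpt]
  simp only [ml3_coeff_mul_laplace_rpow hν hξ hs] at hsum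
  rw [hsum.unique ((hasSum_poch_div_factorial_mul_pow ξ (hq _ (abs_neg c))).mul_left _)]
  exact one_div_rpow_mul_one_sub_rpow_neg_eq hs (by linarith [neg_abs_le c])

end MittagLeffler

theorem stmt8 (lam ν δ s : ℝ) (k : ℕ) (hlam : 0 < lam) (hν : ν ∈ Set.Ioc (0 : ℝ) 1)
    (hδ : 0 < δ) (hs : 0 < s) (hsν : lam < s ^ ν) :
    ∫ t in Set.Ioi (0 : ℝ),
        Real.exp (-(s * t)) *
          (lam ^ (δ * k) * t ^ (ν * δ * k) * ML3 ν (ν * δ * k + 1) (δ * k) (-(lam * t ^ ν)) -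
            lam ^ (δ * (k + 1)) * t ^ (ν * δ * (k + 1)) *
              ML3 ν (ν * δ * (k + 1) + 1) (δ * (k + 1)) (-(lam * t ^ ν))) =
      (1 / s) * (lam ^ (δ * k) / (s ^ ν + lam) ^ (δ * k) -
        lam ^ (δ * (k + 1)) / (s ^ ν + lam) ^ (δ * (k + 1))) := by
  have hc : |lam| < s ^ ν := by rwa [abs_of_pos hlam]
  obtain ⟨hint₁, heq₁⟩ := laplace_rpow_mul_ML3 (ξ := δ * k) hν.1 (by positivity) hs hc
  obtain ⟨hint₂, heq₂⟩ := laplace_rpow_mul_ML3 (ξ := δ * (k + 1)) hν.1 (by positivity) hs hc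
  set F : ℝ → ℝ → ℝ := fun ξ t ↦
    exp (-(s * t)) * (t ^ (ν * ξ) * ML3 ν (ν * ξ + 1) ξ (-(lam * t ^ ν)))
  calc _ = ∫ t in Ioi 0,
        (lam ^ (δ * k) * F (δ * k) t - lam ^ (δ * (k + 1)) * F (δ * (k + 1)) t) := by
        congr 1; funext t; simp only [F, mul_assoc ν δ]; ring
    _ = _ := by
        rw [integral_sub (hint₁.const_mul _) (hint₂.const_mul _), MeasureTheory.integral_const_mul,
          MeasureTheory.integral_const_mul, heq₁, heq₂]
        ring
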